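/- arXiv:0902.4036 — 2 statements merged into one kernel-verified Lean document; each statement's English description precedes it below -/
import Mathlib

section
/- (Leakage of randomized 1-out-of-2 OT.) Every regular embedding ψ_θ of the primitive P^{OT} satisfies S(ρ_B(θ)) ≥ 3/2, and therefore Δ(ψ_θ) ≥ 1/2 (note I(X;Y) = 1 for P^{OT}). Moreover, the canonical embedding (θ ≡ 0) attains equality: S(ρ_B(0)) = 3/2, i.e. its leakage equals 1/2. -/
open scoped BigOperators
open Matrix

noncomputable section

open scoped Classical in
/-- Base-2 von Neumann entropy of a matrix: minus the sum of `λ·log₂ λ` over the real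
eigenvalues (with multiplicity) if the matrix is Hermitian, and `0` otherwise. -/
def vNE {n : Type*} [Fintype n] (ρ : Matrix n n ℂ) : ℝ :=
  if h : ρ.IsHermitian then -∑ i, h.eigenvalues i * Real.logb 2 (h.eigenvalues i) else 0

/-- Shannon entropy (base 2), with the convention `0·log₂ 0 = 0`. -/
def shannon {α : Type*} [Fintype α] (p : α → ℝ) : ℝ :=
  -∑ a, p a * Real.logb 2 (p a)

/-- Marginal on the first component: `P_X`. -/
def margX {X Y : Type*} [Fintype Y] (P : X × Y → ℝ) (x : X) : ℝ := ∑ y, P (x, y)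

/-- Marginal on the second component: `P_Y`. -/
def margY {X Y : Type*} [Fintype X] (P : X × Y → ℝ) (y : Y) : ℝ := ∑ x, P (x, y)

/-- Mutual information `I(X;Y)` of a joint distribution `P` (base 2). -/
def mutualInfo {X Y : Type*} [Fintype X] [Fintype Y] (P : X × Y → ℝ) : ℝ :=
  ∑ x, ∑ y, P (x, y) * Real.logb 2 (P (x, y) / (margX P x * margY P y))

/-- The regular embedding `ψ_θ(x,y) = e^{iθ(x,y)}·√(P(x,y))`. -/
def regEmb {X Y : Type*} (P θ : X × Y → ℝ) (xy : X × Y) : ℂ :=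
  Complex.exp (Complex.I * θ xy) * (Real.sqrt (P xy) : ℂ)

/-- Reduced density matrix `ρ_A(θ)` of the regular embedding `ψ_θ`. -/
def rhoA {X Y : Type*} [Fintype Y] (P θ : X × Y → ℝ) : Matrix X X ℂ :=
  Matrix.of fun x x' => ∑ y, regEmb P θ (x, y) * star (regEmb P θ (x', y))

/-- Reduced density matrix `ρ_B(θ)` of the regular embedding `ψ_θ`. -/
def rhoB {X Y : Type*} [Fintype X] (P θ : X × Y → ℝ) : Matrix Y Y ℂ :=
  Matrix.of fun y y' => ∑ x, regEmb P θ (x, y) * star (regEmb P θ (x, y'))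

/-- Leakage `Δ(ψ_θ) = S(ρ_B(θ)) − I(X;Y)` of a regular embedding. -/
def leakReg {X Y : Type*} [Fintype X] [Fintype Y] (P θ : X × Y → ℝ) : ℝ :=
  vNE (rhoB P θ) - mutualInfo P

/-- Leakage `Δ_P` of a primitive: the infimum of the leakage over all phase functions. -/
def leakPrim {X Y : Type*} [Fintype X] [Fintype Y] (P : X × Y → ℝ) : ℝ :=
  ⨅ θ : X × Y → ℝ, leakReg P θ

/-- The randomized 1-out-of-2 OT primitive `P^{OT}` on `𝒳 = {0,1}×{0,1}` and
`𝒴 = {0,1}×{0,1}`: `P((x₀,x₁),(c,y)) = 1/8` if `y = x_c`, and `0` otherwise. -/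
def POT : (Bool × Bool) × (Bool × Bool) → ℝ := fun p =>
  if p.2.2 = (if p.2.1 then p.1.2 else p.1.1) then 1 / 8 else 0


/-!
Write `ρ_B(θ) = 1/4 + M` with `M = (1/8) [[0, Z], [Zᴴ, 0]]`, where `Z` is the `2 × 2` matrix of
phases `e^{i(θ(x,(0,x₀)) - θ(x,(1,x₁)))}`. The traces of the powers of `M` are the power sums of
the shifted eigenvalues `λ - 1/4`: the first and third vanish, the second is
`2 ‖Z‖_F² / 64 = 1/8`. Four reals with vanishing first and third power sums pair up as `±u, ±v`,
so the spectrum is `1/4 ± u, 1/4 ± v` with `u² + v² = 1/16`.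

With `η x = -x log x`, the bound `η (1/4 + u) + η (1/4 - u) ≥ (1 - 8u²) log 2` is the
binary-entropy inequality `H(p) ≥ 4p(1-p)` (in bits): the power series
`(1+r) log(1+r) + (1-r) log(1-r) = ∑ r^(2k+2) / ((2k+1)(k+1))` has nonnegative coefficients and
sums to `2 log 2` at `r = 1`. Adding the bounds for `u` and `v` gives `S ≥ 3/2`. For `θ = 0` the
fourth power sum forces `uv = 0`, i.e. the spectrum `{1/2, 1/4, 1/4, 0}`, of entropy `3/2`.
-/

open Real Filter Topology

lemma hasSum_negMulLog_one_add_add_negMulLog_one_sub {r : ℝ} (hr : |r| < 1) :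
    HasSum (fun k : ℕ => r ^ (2 * k + 2) / ((2 * k + 1) * (k + 1)))
      (-(negMulLog (1 + r) + negMulLog (1 - r))) := by
  have hr2 : |r ^ 2| < 1 := by
    rw [abs_pow, sq_lt_one_iff₀ (abs_nonneg r)]; exact hr
  -- `(1+r) log(1+r) + (1-r) log(1-r) = r (log(1+r) - log(1-r)) + log(1 - r²)`
  have hodd := (hasSum_log_sub_log_of_abs_lt_one hr).mul_left r
  have heven := hasSum_pow_div_log_of_abs_lt_one hr2
  have h1 : 0 < 1 + r := by linarith [neg_abs_le r]
  have h2 : 0 < 1 - r := by linarith [le_abs_self r]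
  rw [show 1 - r ^ 2 = (1 + r) * (1 - r) by ring, log_mul h1.ne' h2.ne'] at heven
  have hterm : (fun k : ℕ => r ^ (2 * k + 2) / ((2 * k + 1) * (k + 1))) =
      fun k : ℕ =>
        r * (2 * (1 / (2 * k + 1)) * r ^ (2 * k + 1)) - (r ^ 2) ^ (k + 1) / (k + 1) := by
    funext k
    rw [← pow_mul, show 2 * (k + 1) = 2 * k + 2 by ring, pow_succ _ (2 * k + 1)]
    field_simp
    ring
  have hsum : -(negMulLog (1 + r) + negMulLog (1 - r)) =
      r * (log (1 + r) - log (1 - r)) - -(log (1 + r) + log (1 - r)) := by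
    simp only [negMulLog]; ring
  rw [hterm, hsum]
  exact hodd.sub heven

lemma sq_mul_negMulLog_one_add_add_le_of_sq_le {r s : ℝ} (hrs : r ^ 2 ≤ s ^ 2) (hs : |s| < 1) :
    s ^ 2 * -(negMulLog (1 + r) + negMulLog (1 - r)) ≤
      r ^ 2 * -(negMulLog (1 + s) + negMulLog (1 - s)) := by
  have hr : |r| < 1 := lt_of_le_of_lt (sq_le_sq.mp hrs) hs
  refine hasSum_le (fun k => ?_)
    ((hasSum_negMulLog_one_add_add_negMulLog_one_sub hr).mul_left _)
    ((hasSum_negMulLog_one_add_add_negMulLog_one_sub hs).mul_left _)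
  have hk : r ^ (2 * k) ≤ s ^ (2 * k) := by
    simp only [pow_mul]; exact pow_le_pow_left₀ (sq_nonneg r) hrs k
  have hd : (0 : ℝ) < (2 * k + 1) * (k + 1) := by positivity
  rw [mul_div_assoc', mul_div_assoc', div_le_div_iff_of_pos_right hd]
  calc s ^ 2 * r ^ (2 * k + 2) = s ^ 2 * r ^ 2 * r ^ (2 * k) := by ring
    _ ≤ s ^ 2 * r ^ 2 * s ^ (2 * k) := by gcongr
    _ = r ^ 2 * s ^ (2 * k + 2) := by ring

lemma neg_two_mul_log_two_mul_sq_le_negMulLog_one_add_add {r : ℝ} (hr : |r| ≤ 1) :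
    -(2 * log 2 * r ^ 2) ≤ negMulLog (1 + r) + negMulLog (1 - r) := by
  rcases hr.lt_or_eq with hr | hr
  · -- let `s → 1⁻` in the comparison of `r` with `s`
    have hlim : Tendsto (fun s => r ^ 2 * -(negMulLog (1 + s) + negMulLog (1 - s))) (𝓝[<] 1)
        (𝓝 (r ^ 2 * -(negMulLog (1 + 1) + negMulLog (1 - 1)))) :=
      (Continuous.tendsto (by fun_prop) 1).mono_left nhdsWithin_le_nhds
    have hlim' : Tendsto (fun s : ℝ => s ^ 2 * -(negMulLog (1 + r) + negMulLog (1 - r)))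
        (𝓝[<] 1) (𝓝 (1 ^ 2 * -(negMulLog (1 + r) + negMulLog (1 - r)))) :=
      (Continuous.tendsto (by fun_prop) 1).mono_left nhdsWithin_le_nhds
    have hev : ∀ᶠ s in 𝓝[<] 1, s ^ 2 * -(negMulLog (1 + r) + negMulLog (1 - r)) ≤
        r ^ 2 * -(negMulLog (1 + s) + negMulLog (1 - s)) := by
      filter_upwards [Ioo_mem_nhdsLT hr] with s hs
      have hs0 : 0 < s := (abs_nonneg r).trans_lt hs.1
      refine sq_mul_negMulLog_one_add_add_le_of_sq_le ?_ (by rw [abs_of_pos hs0]; exact hs.2)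
      exact sq_le_sq.mpr (by rw [abs_of_pos hs0]; exact hs.1.le)
    have := le_of_tendsto_of_tendsto hlim' hlim hev
    norm_num [negMulLog] at this ⊢
    linarith
  · rcases abs_eq zero_le_one |>.mp hr with rfl | rfl <;> norm_num [negMulLog]

lemma negMulLog_one_div_four : negMulLog (1 / 4) = log 2 / 2 := by
  rw [negMulLog, one_div, log_inv, show (4 : ℝ) = 2 ^ 2 by norm_num, log_pow]
  ring

lemma negMulLog_one_div_two : negMulLog (1 / 2) = log 2 / 2 := by
  rw [negMulLog, one_div, log_inv]
  ring

lemma one_sub_mul_log_two_le_negMulLog_quarter_add_sub {u : ℝ} (hu : |u| ≤ 1 / 4) :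
    (1 - 8 * u ^ 2) * log 2 ≤ negMulLog (1 / 4 + u) + negMulLog (1 / 4 - u) := by
  have hr : |4 * u| ≤ 1 := by rw [abs_mul, abs_of_pos four_pos]; linarith
  have key := neg_two_mul_log_two_mul_sq_le_negMulLog_one_add_add hr
  rw [show 1 / 4 + u = (1 + 4 * u) * (1 / 4) by ring,
    show 1 / 4 - u = (1 - 4 * u) * (1 / 4) by ring, negMulLog_mul, negMulLog_mul,
    negMulLog_one_div_four]
  linarith

lemma exists_pairing_of_sum_eq_zero_of_sum_pow_three_eq_zero {a b c d : ℝ}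
    (h1 : a + b + c + d = 0) (h3 : a ^ 3 + b ^ 3 + c ^ 3 + d ^ 3 = 0) :
    ∃ u v : ℝ, ∀ g : ℝ → ℝ, g a + g b + g c + g d = g u + g (-u) + g v + g (-v) := by
  obtain rfl : d = -(a + b + c) := by linarith
  have hfactor : (a + b) * (a + c) * (b + c) = 0 := by linear_combination (-1 / 3) * h3
  rcases mul_eq_zero.mp hfactor with hab | hbc
  · rcases mul_eq_zero.mp hab with hab | hac
    · refine ⟨a, c, fun g => ?_⟩
      rw [show b = -a by linarith, show -(a + -a + c) = -c by ring]
    · refine ⟨a, b, fun g => ?_⟩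
      rw [show c = -a by linarith, show -(a + b + -a) = -b by ring]
      ring
  · refine ⟨a, b, fun g => ?_⟩
    rw [show c = -b by linarith, show -(a + b + -b) = -a by ring]
    ring

lemma three_halves_mul_log_two_le_sum_negMulLog {a b c d : ℝ} (h1 : a + b + c + d = 0)
    (h2 : a ^ 2 + b ^ 2 + c ^ 2 + d ^ 2 = 1 / 8) (h3 : a ^ 3 + b ^ 3 + c ^ 3 + d ^ 3 = 0) :
    3 / 2 * log 2 ≤ negMulLog (1 / 4 + a) + negMulLog (1 / 4 + b) + negMulLog (1 / 4 + c) +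
      negMulLog (1 / 4 + d) := by
  obtain ⟨u, v, hg⟩ := exists_pairing_of_sum_eq_zero_of_sum_pow_three_eq_zero h1 h3
  have huv : u ^ 2 + v ^ 2 = 1 / 16 := by linarith [hg (· ^ 2), neg_sq u, neg_sq v]
  have hu : |u| ≤ 1 / 4 := abs_le.mpr ⟨by nlinarith, by nlinarith⟩
  have hv : |v| ≤ 1 / 4 := abs_le.mpr ⟨by nlinarith, by nlinarith⟩
  rw [hg fun x => negMulLog (1 / 4 + x)]
  simp only [← sub_eq_add_neg]
  have hsum : (1 - 8 * u ^ 2) * log 2 + (1 - 8 * v ^ 2) * log 2 = 3 / 2 * log 2 := by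
    linear_combination (-8 * log 2) * huv
  linarith [one_sub_mul_log_two_le_negMulLog_quarter_add_sub hu,
    one_sub_mul_log_two_le_negMulLog_quarter_add_sub hv]

lemma sum_negMulLog_eq_three_halves_mul_log_two {a b c d : ℝ} (h1 : a + b + c + d = 0)
    (h2 : a ^ 2 + b ^ 2 + c ^ 2 + d ^ 2 = 1 / 8) (h3 : a ^ 3 + b ^ 3 + c ^ 3 + d ^ 3 = 0)
    (h4 : a ^ 4 + b ^ 4 + c ^ 4 + d ^ 4 = 1 / 128) :
    negMulLog (1 / 4 + a) + negMulLog (1 / 4 + b) + negMulLog (1 / 4 + c) +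
      negMulLog (1 / 4 + d) = 3 / 2 * log 2 := by
  obtain ⟨u, v, hg⟩ := exists_pairing_of_sum_eq_zero_of_sum_pow_three_eq_zero h1 h3
  have huv : u ^ 2 + v ^ 2 = 1 / 16 := by linarith [hg (· ^ 2), neg_sq u, neg_sq v]
  have huv4 : u ^ 4 + v ^ 4 = 1 / 256 := by
    linarith [hg (· ^ 4), show (-u) ^ 4 = u ^ 4 by ring, show (-v) ^ 4 = v ^ 4 by ring]
  have hprod : u * v = 0 := by nlinarith
  have hcentre : negMulLog (1 / 4 + 0) + negMulLog (1 / 4 + -0) = log 2 := by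
    norm_num [negMulLog_one_div_four]
  have hedge : ∀ w : ℝ, w ^ 2 = 1 / 16 →
      negMulLog (1 / 4 + w) + negMulLog (1 / 4 + -w) = log 2 / 2 := by
    intro w hw
    rcases mul_eq_zero.mp (show (w - 1 / 4) * (w + 1 / 4) = 0 by linear_combination hw) with h | h
    · rw [show w = 1 / 4 by linarith]; norm_num [negMulLog_one_div_two]
    · rw [show w = -1 / 4 by linarith]; norm_num [negMulLog_one_div_two]
  rw [hg fun x => negMulLog (1 / 4 + x)]
  rcases mul_eq_zero.mp hprod with rfl | rfl
  · linarith [hedge v (by linarith)]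
  · linarith [hedge u (by linarith)]

lemma Matrix.IsHermitian.trace_cfc {𝕜 n : Type*} [RCLike 𝕜] [Fintype n] [DecidableEq n]
    {A : Matrix n n 𝕜} (hA : A.IsHermitian) (f : ℝ → ℝ) :
    (cfc f A).trace = ∑ i, (f (hA.eigenvalues i) : 𝕜) := by
  rw [hA.cfc_eq, IsHermitian.cfc, Unitary.conjStarAlgAut_apply, trace_mul_cycle,
    Unitary.coe_star_mul_self, Matrix.one_mul, trace_diagonal]
  rfl

lemma Matrix.IsHermitian.trace_sub_smul_one_pow {𝕜 n : Type*} [RCLike 𝕜] [Fintype n]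
    [DecidableEq n] {A : Matrix n n 𝕜} (hA : A.IsHermitian) (c : ℝ) (k : ℕ) :
    ((A - c • 1) ^ k).trace = ((∑ i, (hA.eigenvalues i - c) ^ k : ℝ) : 𝕜) := by
  have hcfc : (A - c • 1) ^ k = cfc (fun x => (x - c) ^ k) A := by
    rw [cfc_pow _ _ _, cfc_sub _ _, cfc_id' ℝ A, cfc_const c A, Algebra.algebraMap_eq_smul_one]
  rw [hcfc, hA.trace_cfc, RCLike.ofReal_sum]

lemma vNE_eq_sum_negMulLog {n : Type*} [Fintype n] [DecidableEq n] {A : Matrix n n ℂ}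
    (hA : A.IsHermitian) : vNE A = (∑ i, negMulLog (hA.eigenvalues i)) / log 2 := by
  obtain rfl : ‹DecidableEq n› = fun a b => Classical.propDecidable (a = b) :=
    Subsingleton.elim _ _
  rw [vNE, dif_pos hA, Finset.sum_div, ← Finset.sum_neg_distrib]
  refine Finset.sum_congr rfl fun i _ => ?_
  rw [negMulLog, ← Real.log_div_log]
  ring

lemma regEmb_mul_star_regEmb {X Y : Type*} (P θ : X × Y → ℝ) (p q : X × Y) :
    regEmb P θ p * star (regEmb P θ q) =
      Complex.exp (Complex.I * (θ p - θ q)) * (√(P p) * √(P q) : ℝ) := by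
  simp only [regEmb, star_mul', Complex.star_def, ← Complex.exp_conj, map_mul, Complex.conj_I,
    Complex.conj_ofReal]
  rw [mul_mul_mul_comm, ← Complex.exp_add]
  push_cast
  ring_nf

lemma isHermitian_rhoB {X Y : Type*} [Fintype X] (P θ : X × Y → ℝ) :
    (rhoB P θ).IsHermitian := by
  ext y y'
  simp [rhoB, mul_comm]

/-- The Hermitian dilation `[[0, Z], [Zᴴ, 0]]`, with the block index as the `Bool` coordinate. -/
def boolDilation {n : Type*} (Z : Matrix n n ℂ) : Matrix (Bool × n) (Bool × n) ℂ :=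
  Matrix.of fun i j => match i.1, j.1 with
    | false, true => Z i.2 j.2
    | true, false => star (Z j.2 i.2)
    | _, _ => 0

lemma trace_boolDilation {n : Type*} [Fintype n] (Z : Matrix n n ℂ) :
    (boolDilation Z).trace = 0 := by
  simp [Matrix.trace, boolDilation]

lemma trace_boolDilation_sq {n : Type*} [Fintype n] [DecidableEq n] (Z : Matrix n n ℂ) :
    (boolDilation Z ^ 2).trace = 2 * ∑ i, ∑ j, (‖Z i j‖ : ℂ) ^ 2 := by
  rw [sq]
  simp only [Matrix.trace, Matrix.diag_apply, Matrix.mul_apply, Fintype.sum_prod_type,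
    Fintype.sum_bool, boolDilation, Matrix.of_apply, mul_zero, Finset.sum_const_zero, zero_add,
    add_zero]
  rw [Finset.sum_comm (f := fun i j => star (Z j i) * Z j i)]
  simp only [Complex.star_def, Complex.mul_conj', Complex.conj_mul']
  ring

lemma trace_boolDilation_pow_three {n : Type*} [Fintype n] [DecidableEq n] (Z : Matrix n n ℂ) :
    (boolDilation Z ^ 3).trace = 0 := by
  simp [Matrix.trace, boolDilation, Fintype.sum_prod_type, pow_succ, Matrix.mul_apply]

lemma trace_boolDilation_one_pow_four :
    (boolDilation (Matrix.of fun _ _ => 1 : Matrix Bool Bool ℂ) ^ 4).trace = 32 := by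
  norm_num [Matrix.trace, boolDilation, Fintype.sum_prod_type, pow_succ, Matrix.mul_apply]

def otPhase (θ : (Bool × Bool) × (Bool × Bool) → ℝ) : Matrix Bool Bool ℂ :=
  Matrix.of fun t t' =>
    Complex.exp (Complex.I * (θ ((t, t'), (false, t)) - θ ((t, t'), (true, t'))))

lemma norm_otPhase (θ : (Bool × Bool) × (Bool × Bool) → ℝ) (t t' : Bool) :
    ‖otPhase θ t t'‖ = 1 := by
  rw [otPhase, Matrix.of_apply, ← Complex.ofReal_sub, mul_comm, Complex.norm_exp_ofReal_mul_I]

lemma otPhase_zero : otPhase (fun _ => 0) = Matrix.of fun _ _ => 1 := by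
  ext t t'
  simp [otPhase]

lemma rhoB_POT (θ : (Bool × Bool) × (Bool × Bool) → ℝ) :
    rhoB POT θ = (1 / 4 : ℝ) • 1 + (1 / 8 : ℝ) • boolDilation (otPhase θ) := by
  have h8 : ((√8 : ℝ) : ℂ)⁻¹ * ((√8 : ℝ) : ℂ)⁻¹ = 1 / 8 := by
    rw [← mul_inv, ← Complex.ofReal_mul, Real.mul_self_sqrt (by norm_num)]; norm_num
  ext ⟨c, t⟩ ⟨c', t'⟩
  simp only [rhoB, Matrix.of_apply, regEmb_mul_star_regEmb, Fintype.sum_prod_type,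
    Fintype.sum_bool]
  cases c <;> cases c' <;> cases t <;> cases t' <;>
    simp only [POT] <;> norm_num [boolDilation, otPhase, ← Complex.exp_conj, h8] <;> ring_nf

lemma sum_eigenvalues_rhoB_POT_sub_pow (θ : (Bool × Bool) × (Bool × Bool) → ℝ) (k : ℕ) :
    ((∑ i, ((isHermitian_rhoB POT θ).eigenvalues i - 1 / 4) ^ k : ℝ) : ℂ) =
      (1 / 8 : ℂ) ^ k * (boolDilation (otPhase θ) ^ k).trace := by
  have h := (isHermitian_rhoB POT θ).trace_sub_smul_one_pow (1 / 4) k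
  have hM : rhoB POT θ - (1 / 4 : ℝ) • 1 = (1 / 8 : ℝ) • boolDilation (otPhase θ) := by
    rw [rhoB_POT, add_sub_cancel_left]
  rw [hM, smul_pow, trace_smul, Complex.real_smul] at h
  rw [← RCLike.ofReal_eq_complex_ofReal, ← h]
  norm_num

lemma eigenvalue_moments_rhoB_POT (θ : (Bool × Bool) × (Bool × Bool) → ℝ) :
    let x := fun i => (isHermitian_rhoB POT θ).eigenvalues i - 1 / 4
    ∑ i, x i = 0 ∧ ∑ i, x i ^ 2 = 1 / 8 ∧ ∑ i, x i ^ 3 = 0 := by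
  have h1 := sum_eigenvalues_rhoB_POT_sub_pow θ 1
  have h2 := sum_eigenvalues_rhoB_POT_sub_pow θ 2
  have h3 := sum_eigenvalues_rhoB_POT_sub_pow θ 3
  simp only [pow_one, trace_boolDilation, mul_zero] at h1
  simp only [trace_boolDilation_sq, norm_otPhase] at h2
  simp only [trace_boolDilation_pow_three, mul_zero] at h3
  refine ⟨?_, ?_, ?_⟩
  · exact Complex.ofReal_injective (h1.trans (by norm_num))
  · exact Complex.ofReal_injective (h2.trans (by norm_num))
  · exact Complex.ofReal_injective (h3.trans (by norm_num))

lemma sum_eigenvalues_rhoB_POT_zero_sub_pow_four :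
    ∑ i, ((isHermitian_rhoB POT fun _ => 0).eigenvalues i - 1 / 4) ^ 4 = 1 / 128 := by
  have h4 := sum_eigenvalues_rhoB_POT_sub_pow (fun _ => 0) 4
  rw [otPhase_zero, trace_boolDilation_one_pow_four] at h4
  exact Complex.ofReal_injective (h4.trans (by norm_num))

lemma three_halves_le_vNE_rhoB_POT (θ : (Bool × Bool) × (Bool × Bool) → ℝ) :
    3 / 2 ≤ vNE (rhoB POT θ) := by
  obtain ⟨m1, m2, m3⟩ := eigenvalue_moments_rhoB_POT θ
  rw [vNE_eq_sum_negMulLog (isHermitian_rhoB POT θ), le_div_iff₀ (log_pos one_lt_two)]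
  simp only [Fintype.sum_prod_type, Fintype.sum_bool, ← add_assoc] at m1 m2 m3 ⊢
  simpa only [add_sub_cancel] using three_halves_mul_log_two_le_sum_negMulLog m1 m2 m3

lemma vNE_rhoB_POT_zero : vNE (rhoB POT fun _ => 0) = 3 / 2 := by
  obtain ⟨m1, m2, m3⟩ := eigenvalue_moments_rhoB_POT fun _ => 0
  have m4 := sum_eigenvalues_rhoB_POT_zero_sub_pow_four
  rw [vNE_eq_sum_negMulLog (isHermitian_rhoB POT _), div_eq_iff (log_pos one_lt_two).ne']
  simp only [Fintype.sum_prod_type, Fintype.sum_bool, ← add_assoc] at m1 m2 m3 m4 ⊢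
  simpa only [add_sub_cancel] using sum_negMulLog_eq_three_halves_mul_log_two m1 m2 m3 m4

lemma mutualInfo_POT : mutualInfo POT = 1 := by
  simp only [mutualInfo, margX, margY, POT, Fintype.sum_prod_type, Fintype.sum_bool]
  norm_num [Real.logb_self_eq_one]

/-- **Leakage of randomized 1-out-of-2 OT.** Every regular embedding `ψ_θ`
of `P^{OT}` satisfies `S(ρ_B(θ)) ≥ 3/2`, and hence `Δ(ψ_θ) ≥ 1/2` (note `I(X;Y) = 1`);
moreover the canonical embedding `θ ≡ 0` attains equality. -/
theorem leakage_POT :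
    mutualInfo POT = 1 ∧
    (∀ θ : (Bool × Bool) × (Bool × Bool) → ℝ, 3 / 2 ≤ vNE (rhoB POT θ)) ∧
    (∀ θ : (Bool × Bool) × (Bool × Bool) → ℝ, 1 / 2 ≤ leakReg POT θ) ∧
    vNE (rhoB POT fun _ => 0) = 3 / 2 ∧
    leakReg POT (fun _ => 0) = 1 / 2 := by
  refine ⟨mutualInfo_POT, three_halves_le_vNE_rhoB_POT, fun θ => ?_, vNE_rhoB_POT_zero, ?_⟩
  · rw [leakReg, mutualInfo_POT]
    linarith [three_halves_le_vNE_rhoB_POT θ]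
  · rw [leakReg, mutualInfo_POT, vNE_rhoB_POT_zero]
    norm_num
end
end

section
/- (Leakage of randomized 1-out-of-2 string OT.) For every r ≥ 1 and every phase function θ, the leakage of the regular embedding ψ_θ of the primitive P^{OT_r} satisfies Δ(ψ_θ) ≥ −(1/2 + 2^{−r−1})·log₂(1/2 + 2^{−r−1}) + (2^r − 1)·(r+1)·2^{−r−1} − r/2 (the leakage of P^{ROT_r}); in particular Δ(ψ_θ) ≥ 1 − (r+3)/2^r. -/
open scoped BigOperators
open Matrix

noncomputable section

/-- The randomized 1-out-of-2 string OT primitive `P^{OT_r}` on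
`𝒳 = {0,1}^r × {0,1}^r` and `𝒴 = {0,1} × {0,1}^r`:
`P((x₀,x₁),(c,y)) = 2^{−2r−1}` if `y = x_c`, and `0` otherwise. -/
def POTstr (r : ℕ) :
    ((Fin r → Bool) × (Fin r → Bool)) × (Bool × (Fin r → Bool)) → ℝ := fun p =>
  if p.2.2 = (if p.2.1 then p.1.2 else p.1.1) then 1 / 2 ^ (2 * r + 1) else 0

/-!
The von Neumann entropy of a state is at least its collision entropy `-log₂ tr ρ²` (Jensen for
`log`). In the support of `P^{OT_r}` no two inputs `x ≠ x'` share two outputs `y ≠ y'`, so every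
nonzero term of `tr ρ_B² = ∑ ψ(x,y) ψ̄(x,y') ψ(x',y') ψ̄(x',y)` has `x = x'` or `y = y'` and its
phases cancel: `tr ρ_B² = ∑ P_X² + ∑ P_Y² - ∑ P² = 2^{-r-1} (1 + 2^{-r})` whatever `θ` is. As
`I(X;Y) = r`, this gives `Δ(ψ_θ) ≥ 1 - log₂ (1 + 2^{-r})`, which dominates both stated bounds
because `log₂ (1 + x) ≤ 2x`.
-/

open Real

namespace Matrix.IsHermitian

variable {𝕜 n : Type*} [RCLike 𝕜] [Fintype n] [DecidableEq n] {A : Matrix n n 𝕜}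

theorem trace_mul_self (hA : A.IsHermitian) :
    (A * A).trace = ((∑ i, hA.eigenvalues i ^ 2 : ℝ) : 𝕜) := by
  conv_lhs => rw [hA.spectral_theorem, ← map_mul, diagonal_mul_diagonal,
    Unitary.conjStarAlgAut_apply, trace_mul_cycle, Unitary.coe_star_mul_self, one_mul,
    trace_diagonal]
  simp [sq]

end Matrix.IsHermitian

theorem sum_mul_logb_le_logb_sum_sq {ι : Type*} [Fintype ι] {b : ℝ} (hb : 1 < b) {w : ι → ℝ}
    (hw : ∀ i, 0 ≤ w i) (hw1 : ∑ i, w i = 1) :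
    ∑ i, w i * logb b (w i) ≤ logb b (∑ i, w i ^ 2) := by
  -- Jensen for `log` with weights `w` at the points `w i`, moved off `0` where `w i = 0`
  let p i := if w i = 0 then 1 else w i
  have hp : ∀ i, 0 < p i := fun i => by
    dsimp only [p]
    split_ifs with h
    exacts [one_pos, lt_of_le_of_ne (hw i) (Ne.symm h)]
  have jensen := strictConcaveOn_log_Ioi.concaveOn.le_map_sum (t := Finset.univ) (p := p)
    (fun i _ => hw i) hw1 (fun i _ => hp i)
  have hlog : ∀ i, w i • log (p i) = w i * log (w i) := fun i => by
    by_cases h : w i = 0 <;> simp [p, h]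
  have hsq : ∀ i, w i • p i = w i ^ 2 := fun i => by
    by_cases h : w i = 0 <;> simp [p, h, sq]
  simp only [hlog, hsq] at jensen
  simp only [logb, ← mul_div_assoc, ← Finset.sum_div]
  exact div_le_div_of_nonneg_right jensen (log_nonneg hb.le)

open scoped ComplexOrder in
theorem neg_logb_trace_mul_self_le_vNE {n : Type*} [Fintype n] {ρ : Matrix n n ℂ}
    (hρ : ρ.PosSemidef) (htr : ρ.trace = 1) : -logb 2 (ρ * ρ).trace.re ≤ vNE ρ := by
  classical
  rw [vNE, dif_pos hρ.1, neg_le_neg_iff, hρ.1.trace_mul_self]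
  have hsum : ∑ i, hρ.1.eigenvalues i = 1 := by
    have := hρ.1.trace_eq_sum_eigenvalues
    rw [htr] at this
    simpa using (congrArg RCLike.re this).symm
  simp only [RCLike.re_to_complex.symm, RCLike.ofReal_re]
  exact sum_mul_logb_le_logb_sum_sq one_lt_two hρ.eigenvalues_nonneg hsum

section RegularEmbedding

variable {X Y : Type*} (P θ : X × Y → ℝ)

theorem regEmb_eq_zero {a : X × Y} (h : P a = 0) : regEmb P θ a = 0 := by
  simp [regEmb, h]

theorem regEmb_mul_star {a : X × Y} (h : 0 ≤ P a) :
    regEmb P θ a * star (regEmb P θ a) = P a := by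
  have hphase : Complex.exp (Complex.I * θ a) * star (Complex.exp (Complex.I * θ a)) = 1 := by
    rw [Complex.star_def, ← Complex.exp_conj, ← Complex.exp_add]
    simp [Complex.conj_ofReal]
  calc regEmb P θ a * star (regEmb P θ a)
      = Complex.exp (Complex.I * θ a) * star (Complex.exp (Complex.I * θ a)) *
          ((√(P a) * √(P a) : ℝ) : ℂ) := by
        simp only [regEmb, star_mul', Complex.star_def, Complex.conj_ofReal, Complex.ofReal_mul]
        ring
    _ = P a := by rw [hphase, one_mul, Real.mul_self_sqrt h]

def SupportRectangleFree (P : X × Y → ℝ) : Prop :=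
  ∀ x x' y y', P (x, y) ≠ 0 → P (x, y') ≠ 0 → P (x', y) ≠ 0 → P (x', y') ≠ 0 → x = x' ∨ y = y'

variable {P}

theorem regEmb_four_cycle [DecidableEq X] [DecidableEq Y] (hP : 0 ≤ P)
    (hR : SupportRectangleFree P) (x x' : X) (y y' : Y) :
    regEmb P θ (x, y) * star (regEmb P θ (x, y')) *
        (regEmb P θ (x', y') * star (regEmb P θ (x', y))) =
      (((if x = x' then P (x, y) * P (x, y') else 0) +
        (if y = y' then P (x, y) * P (x', y) else 0) -
        (if x = x' ∧ y = y' then P (x, y) ^ 2 else 0) : ℝ) : ℂ) := by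
  by_cases hx : x = x'
  · subst hx
    calc _ = regEmb P θ (x, y) * star (regEmb P θ (x, y)) *
          (regEmb P θ (x, y') * star (regEmb P θ (x, y'))) := by ring
      _ = _ := by
        rw [regEmb_mul_star P θ (hP _), regEmb_mul_star P θ (hP _)]
        rcases eq_or_ne y y' with rfl | hy <;> simp [sq, *]
  by_cases hy : y = y'
  · subst hy
    calc _ = regEmb P θ (x, y) * star (regEmb P θ (x, y)) *
          (regEmb P θ (x', y) * star (regEmb P θ (x', y))) := by ring
      _ = _ := by
        rw [regEmb_mul_star P θ (hP _), regEmb_mul_star P θ (hP _)]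
        simp [hx]
  obtain h | h | h | h : P (x, y) = 0 ∨ P (x, y') = 0 ∨ P (x', y) = 0 ∨ P (x', y') = 0 := by
    by_contra! h
    exact (hR x x' y y' h.1 h.2.1 h.2.2.1 h.2.2.2).elim hx hy
  all_goals simp [regEmb_eq_zero P θ h, hx, hy]

variable [Fintype X] [Fintype Y]

open scoped ComplexOrder in
variable (P) in
theorem rhoB_posSemidef : (rhoB P θ).PosSemidef := by
  have : rhoB P θ = (of fun y x => regEmb P θ (x, y)) * (of fun y x => regEmb P θ (x, y))ᴴ := by
    ext y y'
    simp [rhoB, mul_apply]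
  exact this ▸ posSemidef_self_mul_conjTranspose _

theorem rhoB_trace (hP : 0 ≤ P) : (rhoB P θ).trace = ((∑ x, ∑ y, P (x, y) : ℝ) : ℂ) := by
  rw [Finset.sum_comm]
  push_cast
  simp only [trace, diag_apply, rhoB, of_apply, regEmb_mul_star P θ (hP _)]

theorem rhoB_trace_mul_self [DecidableEq X] [DecidableEq Y] (hP : 0 ≤ P)
    (hR : SupportRectangleFree P) :
    (rhoB P θ * rhoB P θ).trace =
      ((∑ x, margX P x ^ 2 + ∑ y, margY P y ^ 2 - ∑ x, ∑ y, P (x, y) ^ 2 : ℝ) : ℂ) := by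
  have expand : (rhoB P θ * rhoB P θ).trace = ∑ y, ∑ y', ∑ x, ∑ x',
      regEmb P θ (x, y) * star (regEmb P θ (x, y')) *
        (regEmb P θ (x', y') * star (regEmb P θ (x', y))) := by
    simp only [trace, diag_apply, mul_apply, rhoB, of_apply, Finset.sum_mul_sum]
  simp only [expand, regEmb_four_cycle θ hP hR, ← Complex.ofReal_sum]
  congr 1
  simp only [Finset.sum_add_distrib, Finset.sum_sub_distrib, ite_and, Finset.sum_ite_irrel,
    Finset.sum_const_zero, Finset.sum_ite_eq, Finset.mem_univ, if_true, margX, margY, sq,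
    Finset.sum_mul_sum]
  rw [Finset.sum_comm (f := fun y x => P (x, y) * P (x, y))]
  congr 2
  exact (Finset.sum_congr rfl fun _ _ => Finset.sum_comm).trans Finset.sum_comm

end RegularEmbedding

theorem leakReg_ge_of_supportRectangleFree {X Y : Type*} [Fintype X] [Fintype Y]
    {P : X × Y → ℝ} (hP : 0 ≤ P) (hP1 : ∑ x, ∑ y, P (x, y) = 1) (hR : SupportRectangleFree P)
    (θ : X × Y → ℝ) :
    -logb 2 (∑ x, margX P x ^ 2 + ∑ y, margY P y ^ 2 - ∑ x, ∑ y, P (x, y) ^ 2) - mutualInfo P ≤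
      leakReg P θ := by
  classical
  have hS :=
    neg_logb_trace_mul_self_le_vNE (rhoB_posSemidef P θ) (by simp [rhoB_trace θ hP, hP1])
  rw [rhoB_trace_mul_self θ hP hR, Complex.ofReal_re] at hS
  exact sub_le_sub_right hS _

section ObliviousTransfer

variable {r : ℕ}

theorem POTstr_nonneg : 0 ≤ POTstr r := fun _ => by
  unfold POTstr; split <;> positivity

theorem POTstr_supportRectangleFree : SupportRectangleFree (POTstr r) := by
  rintro ⟨a, b⟩ ⟨a', b'⟩ ⟨c, s⟩ ⟨c', s'⟩ h₁ h₂ h₃ h₄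
  simp only [POTstr, ne_eq, ite_eq_right_iff, not_forall] at h₁ h₂ h₃ h₄
  cases c <;> cases c' <;> simp_all

theorem margX_POTstr (x : (Fin r → Bool) × (Fin r → Bool)) :
    margX (POTstr r) x = 1 / 2 ^ (2 * r) := by
  simp [margX, POTstr, Fintype.sum_prod_type, pow_succ]
  ring

theorem margY_POTstr (y : Bool × (Fin r → Bool)) : margY (POTstr r) y = 1 / 2 ^ (r + 1) := by
  have h2r : (2 : ℝ) ^ (2 * r + 1) = 2 ^ r * 2 ^ (r + 1) := by rw [← pow_add]; ring_nf
  obtain ⟨_ | _, s⟩ := y <;>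
    simp only [margY, POTstr, Fintype.sum_prod_type, Bool.false_eq_true, if_false, if_true]
  on_goal 1 => rw [Finset.sum_comm]
  all_goals
    simp [h2r]
    field_simp

theorem sum_POTstr : ∑ x, ∑ y, POTstr r (x, y) = 1 := by
  change ∑ x, margX (POTstr r) x = 1
  simp [margX_POTstr, two_mul, pow_add]
  field_simp

theorem POTstr_sq (a) : POTstr r a ^ 2 = 1 / 2 ^ (2 * r + 1) * POTstr r a := by
  unfold POTstr; split_ifs <;> ring

theorem POTstr_eq_of_ne_zero {a} (h : POTstr r a ≠ 0) : POTstr r a = 1 / 2 ^ (2 * r + 1) :=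
  mul_right_cancel₀ h (by rw [← sq, POTstr_sq])

theorem mutualInfo_POTstr : mutualInfo (POTstr r) = r := by
  have hratio :
      (1 / 2 ^ (2 * r + 1) : ℝ) / (1 / 2 ^ (2 * r) * (1 / 2 ^ (r + 1))) = 2 ^ r := by
    rw [pow_succ, two_mul, pow_add, pow_succ]
    field_simp
  have hterm (x y) : POTstr r (x, y) *
      logb 2 (POTstr r (x, y) / (margX (POTstr r) x * margY (POTstr r) y)) =
        POTstr r (x, y) * r := by
    by_cases h : POTstr r (x, y) = 0
    · simp [h]
    · rw [POTstr_eq_of_ne_zero h, margX_POTstr, margY_POTstr, hratio, logb_pow,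
        logb_self_eq_one one_lt_two, mul_one]
  simp only [mutualInfo, hterm, ← Finset.sum_mul, sum_POTstr, one_mul]

theorem sum_marginals_sq_sub_sum_sq_POTstr :
    ∑ x, margX (POTstr r) x ^ 2 + ∑ y, margY (POTstr r) y ^ 2 - ∑ x, ∑ y, POTstr r (x, y) ^ 2 =
      (1 + 1 / 2 ^ r) / 2 ^ (r + 1) := by
  simp only [margX_POTstr, margY_POTstr, POTstr_sq, ← Finset.mul_sum, sum_POTstr]
  simp
  field_simp
  ring

end ObliviousTransfer

theorem one_sub_logb_le_leakReg_POTstr {r : ℕ}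
    (θ : ((Fin r → Bool) × (Fin r → Bool)) × (Bool × (Fin r → Bool)) → ℝ) :
    1 - logb 2 (1 + 1 / 2 ^ r) ≤ leakReg (POTstr r) θ := by
  have h := leakReg_ge_of_supportRectangleFree POTstr_nonneg sum_POTstr
    POTstr_supportRectangleFree θ
  rw [sum_marginals_sq_sub_sum_sq_POTstr, mutualInfo_POTstr,
    logb_div (by positivity) (by positivity), logb_pow, logb_self_eq_one one_lt_two] at h
  push_cast at h
  linarith

theorem logb_two_one_add_le {x : ℝ} (hx : 0 ≤ x) : logb 2 (1 + x) ≤ 2 * x := by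
  rw [logb, div_le_iff₀ (log_pos one_lt_two)]
  nlinarith [log_le_sub_one_of_pos (by linarith : 0 < 1 + x), log_two_gt_d9]

theorem two_mul_one_sub_one_div_two_pow_le (r : ℕ) : 2 * (1 - 1 / 2 ^ r : ℝ) ≤ r := by
  rcases r with _ | _ | r
  · norm_num
  · norm_num
  · have : (0 : ℝ) < 1 / 2 ^ (r + 2) := by positivity
    push_cast
    linarith

theorem leakage_POTstr_general (r : ℕ)
    (θ : ((Fin r → Bool) × (Fin r → Bool)) × (Bool × (Fin r → Bool)) → ℝ) :
    -(1 / 2 + 1 / 2 ^ (r + 1)) * Real.logb 2 (1 / 2 + 1 / 2 ^ (r + 1)) +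
        ((2 : ℝ) ^ r - 1) * ((r : ℝ) + 1) / 2 ^ (r + 1) - (r : ℝ) / 2 ≤
      leakReg (POTstr r) θ ∧
    1 - ((r : ℝ) + 3) / 2 ^ r ≤ leakReg (POTstr r) θ := by
  have hleak := one_sub_logb_le_leakReg_POTstr θ
  set x : ℝ := 1 / 2 ^ r with hx
  have hx0 : 0 ≤ x := by positivity
  have hx1 : x ≤ 1 := by rw [hx, div_le_one (by positivity)]; exact one_le_pow₀ one_le_two
  have hl := logb_two_one_add_le hx0
  have hr := two_mul_one_sub_one_div_two_pow_le r
  have hpow : (2 : ℝ) ^ (r + 1) = 2 ^ r * 2 := pow_succ 2 r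
  have e₁ : (1 / 2 + 1 / 2 ^ (r + 1) : ℝ) = (1 + x) / 2 := by rw [hx, hpow]; field_simp
  have e₂ : ((2 : ℝ) ^ r - 1) * (r + 1) / 2 ^ (r + 1) = (1 - x) * (r + 1) / 2 := by
    rw [hx, hpow]; field_simp
  have e₃ : ((r : ℝ) + 3) / 2 ^ r = (r + 3) * x := by rw [hx]; ring
  rw [e₁, e₂, e₃, logb_div (by positivity) two_ne_zero, logb_self_eq_one one_lt_two]
  constructor
  · nlinarith [mul_le_mul_of_nonneg_left hl (sub_nonneg.mpr hx1),
      mul_le_mul_of_nonneg_left hr hx0]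
  · nlinarith [mul_nonneg (Nat.cast_nonneg r : (0 : ℝ) ≤ r) hx0]

/-- **Leakage of randomized 1-out-of-2 string OT.** For every `r ≥ 1` and
every phase function `θ`, the leakage of the regular embedding `ψ_θ` of `P^{OT_r}` is at
least the leakage of `P^{ROT_r}`; in particular `Δ(ψ_θ) ≥ 1 − (r+3)/2^r`. -/
theorem leakage_POTstr (r : ℕ) (hr : 1 ≤ r)
    (θ : ((Fin r → Bool) × (Fin r → Bool)) × (Bool × (Fin r → Bool)) → ℝ) :
    -(1 / 2 + 1 / 2 ^ (r + 1)) * Real.logb 2 (1 / 2 + 1 / 2 ^ (r + 1)) +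
        ((2 : ℝ) ^ r - 1) * ((r : ℝ) + 1) / 2 ^ (r + 1) - (r : ℝ) / 2 ≤
      leakReg (POTstr r) θ ∧
    1 - ((r : ℝ) + 3) / 2 ^ r ≤ leakReg (POTstr r) θ :=
  leakage_POTstr_general r θ
end
end
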